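/- Let I₁, I₂ ⊆ ℝ be nonempty open intervals, D = (1/2)(I₁+I₂). Suppose there exist λ, μ ∈ ℝ and open intervals U₁, U₂ ⊆ I₁ and V₁, V₂ ⊆ I₂ such that f₁ ≡ λ on U₁, f₂ ≡ λ on V₁, f₁ ≡ μ on U₂, f₂ ≡ μ on V₂, and φ(u) = 0 for all u ∈ (1/2)(K₁ + I₂) ∪ (1/2)(I₁ + K₂), where K₁ = I₁ \ (U₁ ∪ U₂), K₂ = I₂ \ (V₁ ∪ V₂), and suppose inf U₁ = inf I₁, inf V₁ = inf I₂, sup U₂ = sup I₁, sup V₂ = sup I₂ (in the extended reals), and K₁, K₂ are nonempty closed proper subintervals. Then φ((x+y)/2)(f₁(x) − f₂(y)) = 0 for all x ∈ I₁, y ∈ I₂. -/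
import Mathlib


/-- The set `(1/2)(A + B) = {(a+b)/2 : a ∈ A, b ∈ B}`. -/
def halfSum (A B : Set ℝ) : Set ℝ := {u | ∃ a ∈ A, ∃ b ∈ B, u = (a + b) / 2}

/-- The infimum of a set of reals, taken in the extended reals. -/
noncomputable def eInf (A : Set ℝ) : EReal := sInf ((fun x : ℝ => (x : EReal)) '' A)

/-- The supremum of a set of reals, taken in the extended reals. -/
noncomputable def eSup (A : Set ℝ) : EReal := sSup ((fun x : ℝ => (x : EReal)) '' A)


lemma below_of_einf {A I : Set ℝ} (hA : A.OrdConnected) (hI : IsOpen I)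
    (h : eInf A = eInf I) (k : ℝ) (hk : k ∈ I) (hkA : k ∉ A) {x : ℝ} (hx : x ∈ A) : x < k := by
  rcases lt_trichotomy x k with h1 | h1 | h1
  · exact h1
  · exact absurd (h1 ▸ hx) hkA
  · exfalso
    have hIlt : eInf I < (k : EReal) := by
      obtain ⟨ε, hε, hball⟩ := Metric.isOpen_iff.1 hI k hk
      have hmem : k - ε/2 ∈ I := hball (by
        simp only [Metric.mem_ball, Real.dist_eq]
        rw [abs_lt]; constructor <;> linarith)
      calc eInf I ≤ ((k - ε/2 : ℝ) : EReal) := sInf_le ⟨_, hmem, rfl⟩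
        _ < (k : EReal) := by exact_mod_cast by linarith
    have hAlt : eInf A < (k : EReal) := h ▸ hIlt
    have : ∃ u ∈ A, u < k := by
      by_contra hc
      push_neg at hc
      have : (k : EReal) ≤ eInf A := le_sInf (by rintro b ⟨u, hu, rfl⟩; exact EReal.coe_le_coe_iff.2 (hc u hu))
      exact absurd hAlt (not_lt.2 this)
    obtain ⟨u, hu, huk⟩ := this
    exact hkA (hA.out hu hx ⟨le_of_lt huk, le_of_lt h1⟩)

lemma above_of_esup {A I : Set ℝ} (hA : A.OrdConnected) (hI : IsOpen I)
    (h : eSup A = eSup I) (k : ℝ) (hk : k ∈ I) (hkA : k ∉ A) {x : ℝ} (hx : x ∈ A) : k < x := by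
  rcases lt_trichotomy k x with h1 | h1 | h1
  · exact h1
  · exact absurd (h1 ▸ hx) hkA
  · exfalso
    have hIlt : (k : EReal) < eSup I := by
      obtain ⟨ε, hε, hball⟩ := Metric.isOpen_iff.1 hI k hk
      have hmem : k + ε/2 ∈ I := hball (by
        simp only [Metric.mem_ball, Real.dist_eq]
        rw [abs_lt]; constructor <;> linarith)
      calc (k : EReal) < ((k + ε/2 : ℝ) : EReal) := by exact_mod_cast by linarith
        _ ≤ eSup I := le_sSup ⟨_, hmem, rfl⟩
    have hAlt : (k : EReal) < eSup A := h ▸ hIlt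
    have : ∃ u ∈ A, k < u := by
      by_contra hc
      push_neg at hc
      have : eSup A ≤ (k : EReal) := sSup_le (by rintro b ⟨u, hu, rfl⟩; exact EReal.coe_le_coe_iff.2 (hc u hu))
      exact absurd hAlt (not_lt.2 this)
    obtain ⟨u, hu, huk⟩ := this
    exact hkA (hA.out hx hu ⟨le_of_lt h1, le_of_lt huk⟩)
theorem two_sided_constant_solution_solves (I₁ I₂ : Set ℝ)
    (hI₁o : IsOpen I₁) (hI₁c : I₁.OrdConnected) (hI₁n : I₁.Nonempty)
    (hI₂o : IsOpen I₂) (hI₂c : I₂.OrdConnected) (hI₂n : I₂.Nonempty)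
    (φ f₁ f₂ : ℝ → ℝ) (lam mu : ℝ) (U₁ U₂ V₁ V₂ : Set ℝ)
    (hU₁o : IsOpen U₁) (hU₁c : U₁.OrdConnected) (hU₁ : U₁ ⊆ I₁)
    (hU₂o : IsOpen U₂) (hU₂c : U₂.OrdConnected) (hU₂ : U₂ ⊆ I₁)
    (hV₁o : IsOpen V₁) (hV₁c : V₁.OrdConnected) (hV₁ : V₁ ⊆ I₂)
    (hV₂o : IsOpen V₂) (hV₂c : V₂.OrdConnected) (hV₂ : V₂ ⊆ I₂)
    (hf1lam : ∀ x ∈ U₁, f₁ x = lam) (hf2lam : ∀ y ∈ V₁, f₂ y = lam)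
    (hf1mu : ∀ x ∈ U₂, f₁ x = mu) (hf2mu : ∀ y ∈ V₂, f₂ y = mu)
    (hφ : ∀ u ∈ halfSum (I₁ \ (U₁ ∪ U₂)) I₂ ∪ halfSum I₁ (I₂ \ (V₁ ∪ V₂)), φ u = 0)
    (hendsU₁ : eInf U₁ = eInf I₁) (hendsV₁ : eInf V₁ = eInf I₂)
    (hendsU₂ : eSup U₂ = eSup I₁) (hendsV₂ : eSup V₂ = eSup I₂)
    (hK₁n : (I₁ \ (U₁ ∪ U₂)).Nonempty) (hK₂n : (I₂ \ (V₁ ∪ V₂)).Nonempty)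
    (hK₁c : (I₁ \ (U₁ ∪ U₂)).OrdConnected) (hK₂c : (I₂ \ (V₁ ∪ V₂)).OrdConnected)
    (hK₁cl : closure (I₁ \ (U₁ ∪ U₂)) ∩ I₁ ⊆ I₁ \ (U₁ ∪ U₂))
    (hK₂cl : closure (I₂ \ (V₁ ∪ V₂)) ∩ I₂ ⊆ I₂ \ (V₁ ∪ V₂))
    (hK₁prop : I₁ \ (U₁ ∪ U₂) ≠ I₁) (hK₂prop : I₂ \ (V₁ ∪ V₂) ≠ I₂) :
    ∀ x ∈ I₁, ∀ y ∈ I₂, φ ((x + y) / 2) * (f₁ x - f₂ y) = 0 := by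
  intro x hx y hy
  obtain ⟨k₁, hk₁⟩ := hK₁n
  obtain ⟨k₂, hk₂⟩ := hK₂n
  by_cases hxK : x ∈ I₁ \ (U₁ ∪ U₂)
  · rw [hφ _ (Or.inl ⟨x, hxK, y, hy, rfl⟩), zero_mul]
  by_cases hyK : y ∈ I₂ \ (V₁ ∪ V₂)
  · rw [hφ _ (Or.inr ⟨x, hx, y, hyK, rfl⟩), zero_mul]
  have hxU : x ∈ U₁ ∪ U₂ := by
    by_contra h; exact hxK ⟨hx, h⟩
  have hyV : y ∈ V₁ ∪ V₂ := by
    by_contra h; exact hyK ⟨hy, h⟩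
  have hk₁U₁ : k₁ ∉ U₁ := fun h => hk₁.2 (Or.inl h)
  have hk₁U₂ : k₁ ∉ U₂ := fun h => hk₁.2 (Or.inr h)
  have hk₂V₁ : k₂ ∉ V₁ := fun h => hk₂.2 (Or.inl h)
  have hk₂V₂ : k₂ ∉ V₂ := fun h => hk₂.2 (Or.inr h)
  rcases hxU with hxU | hxU <;> rcases hyV with hyV | hyV
  · rw [hf1lam x hxU, hf2lam y hyV, sub_self, mul_zero]
  · -- x ∈ U₁, y ∈ V₂ : x < k₁, k₂ < y
    have hx1 : x < k₁ := below_of_einf hU₁c hI₁o hendsU₁ k₁ hk₁.1 hk₁U₁ hxU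
    have hy2 : k₂ < y := above_of_esup hV₂c hI₂o hendsV₂ k₂ hk₂.1 hk₂V₂ hyV
    by_cases hb : k₂ ≤ x + y - k₁
    · have hbI : x + y - k₁ ∈ I₂ := hI₂c.out hk₂.1 hy ⟨hb, by linarith⟩
      rw [hφ _ (Or.inl ⟨k₁, hk₁, x + y - k₁, hbI, by ring⟩), zero_mul]
    · push_neg at hb
      have haI : x + y - k₂ ∈ I₁ := hI₁c.out hx hk₁.1 ⟨by linarith, by linarith⟩
      rw [hφ _ (Or.inr ⟨x + y - k₂, haI, k₂, hk₂, by ring⟩), zero_mul]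
  · -- x ∈ U₂, y ∈ V₁ : k₁ < x, y < k₂
    have hx1 : k₁ < x := above_of_esup hU₂c hI₁o hendsU₂ k₁ hk₁.1 hk₁U₂ hxU
    have hy2 : y < k₂ := below_of_einf hV₁c hI₂o hendsV₁ k₂ hk₂.1 hk₂V₁ hyV
    by_cases hb : x + y - k₁ ≤ k₂
    · have hbI : x + y - k₁ ∈ I₂ := hI₂c.out hy hk₂.1 ⟨by linarith, hb⟩
      rw [hφ _ (Or.inl ⟨k₁, hk₁, x + y - k₁, hbI, by ring⟩), zero_mul]
    · push_neg at hb
      have haI : x + y - k₂ ∈ I₁ := hI₁c.out hk₁.1 hx ⟨by linarith, by linarith⟩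
      rw [hφ _ (Or.inr ⟨x + y - k₂, haI, k₂, hk₂, by ring⟩), zero_mul]
  · rw [hf1mu x hxU, hf2mu y hyV, sub_self, mul_zero]
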